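/- Let f, f₁, f₂, … be holomorphic self-maps of the open unit disc 𝔻 such that for each positive integer n and every z ∈ 𝔻 with ρ(z, 0) < 1 + ρ(f^{n−1}(0), 0) one has ρ(fₙ(z), f(z)) < 1/2ⁿ. Then the left compositions Fₙ = fₙ ∘ fₙ₋₁ ∘ ⋯ ∘ f₁ satisfy ρ(Fₙ(0), fⁿ(0)) < 1 − 1/2ⁿ for every positive integer n. -/

import Mathlib

/-!
Induction on `n`. Put `w = Fₙ(0)` and `p = fⁿ(0)`. By the triangle inequality and the
Schwarz–Pick lemma, `ρ(fₙ₊₁(w), f(p)) ≤ ρ(fₙ₊₁(w), f(w)) + ρ(w, p)`. The induction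
hypothesis gives `ρ(w, p) < 1 - 2⁻ⁿ`, so `w` lies in the hyperbolic disc of radius
`1 + ρ(p, 0)` about `0`, where `fₙ₊₁` is `2⁻ⁿ⁻¹`-close to `f`; adding the two bounds
gives `1 - 2⁻ⁿ⁻¹`.

The triangle inequality and Schwarz–Pick for `ρ = 2 artanh δ` are derived from the
pseudo-hyperbolic distance `δ(z, w) = |z - w| / |1 - w̄ z|`: disc automorphisms preserve `δ`,
which reduces Schwarz–Pick to the Schwarz lemma and the triangle inequality to the case `u = 0`,
where `δ(a, b) ≤ (|a| + |b|) / (1 + |a| |b|)` and `artanh` turns this bound into a sum.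
-/

open Complex Set Filter Metric

/-- The open unit disc in the complex plane. -/
def unitDisc : Set ℂ := {z : ℂ | ‖z‖ < 1}

/-- Inverse hyperbolic tangent. -/
noncomputable def artanh (x : ℝ) : ℝ := (1 / 2) * Real.log ((1 + x) / (1 - x))

/-- The hyperbolic distance on the unit disc, induced by the Riemannian metric
`2|dz|/(1-|z|²)`. -/
noncomputable def hdist (z w : ℂ) : ℝ :=
  2 * artanh ‖(z - w) / (1 - (starRingEnd ℂ) w * z)‖

/-- Left compositions: `leftComp f n = f (n-1) ∘ ⋯ ∘ f 1 ∘ f 0`, so that `f k`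
plays the role of the `(k+1)`-st map `f_{k+1}` of the sequence. -/
def leftComp (f : ℕ → ℂ → ℂ) : ℕ → ℂ → ℂ
  | 0 => id
  | n + 1 => f n ∘ leftComp f n

/-- Right compositions: `rightComp g n = g 0 ∘ g 1 ∘ ⋯ ∘ g (n-1)`, so that `g k`
plays the role of the `(k+1)`-st map `g_{k+1}` of the sequence. -/
def rightComp (g : ℕ → ℂ → ℂ) : ℕ → ℂ → ℂ
  | 0 => id
  | n + 1 => rightComp g n ∘ g n

open scoped ComplexConjugate

noncomputable def pseudoDist (z w : ℂ) : ℝ := ‖(z - w) / (1 - conj w * z)‖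

noncomputable def moebius (u z : ℂ) : ℂ := (u - z) / (1 - conj u * z)

lemma unitDisc_eq_ball : unitDisc = ball (0 : ℂ) 1 := by
  ext z
  simp [unitDisc]

lemma zero_mem_unitDisc : (0 : ℂ) ∈ unitDisc := by simp [unitDisc]

lemma one_sub_conj_mul_ne_zero {z w : ℂ} (hz : z ∈ unitDisc) (hw : w ∈ unitDisc) :
    1 - conj w * z ≠ 0 := by
  have h : ‖conj w * z‖ < 1 := by
    rw [norm_mul, Complex.norm_conj]
    exact mul_lt_one_of_nonneg_of_lt_one_left (norm_nonneg _) hw hz.le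
  exact sub_ne_zero.mpr fun h1 => by simp [← h1] at h

lemma sq_norm_one_sub_conj_mul_sub_sq_norm_sub (z w : ℂ) :
    ‖1 - conj w * z‖ ^ 2 - ‖z - w‖ ^ 2 = (1 - ‖z‖ ^ 2) * (1 - ‖w‖ ^ 2) := by
  simp only [Complex.sq_norm, Complex.normSq_apply, Complex.sub_re, Complex.sub_im,
    Complex.mul_re, Complex.mul_im, Complex.conj_re, Complex.conj_im, Complex.one_re,
    Complex.one_im]
  ring

lemma pseudoDist_nonneg (z w : ℂ) : 0 ≤ pseudoDist z w := norm_nonneg _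

lemma pseudoDist_lt_one {z w : ℂ} (hz : z ∈ unitDisc) (hw : w ∈ unitDisc) :
    pseudoDist z w < 1 := by
  have hden : 0 < ‖1 - conj w * z‖ := norm_pos_iff.mpr (one_sub_conj_mul_ne_zero hz hw)
  rw [pseudoDist, norm_div, div_lt_one hden]
  have hz' : ‖z‖ ^ 2 < 1 := pow_lt_one₀ (norm_nonneg _) hz two_ne_zero
  have hw' : ‖w‖ ^ 2 < 1 := pow_lt_one₀ (norm_nonneg _) hw two_ne_zero
  have hpos : 0 < (1 - ‖z‖ ^ 2) * (1 - ‖w‖ ^ 2) := mul_pos (by linarith) (by linarith)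
  rw [← sq_norm_one_sub_conj_mul_sub_sq_norm_sub] at hpos
  exact lt_of_pow_lt_pow_left₀ 2 (norm_nonneg _) (by linarith)

lemma pseudoDist_comm (z w : ℂ) : pseudoDist z w = pseudoDist w z := by
  have h : 1 - conj z * w = conj (1 - conj w * z) := by
    simp only [map_sub, map_one, map_mul, Complex.conj_conj]
    ring
  rw [pseudoDist, pseudoDist, norm_div, norm_div, norm_sub_rev, h, Complex.norm_conj]

lemma norm_moebius (u z : ℂ) : ‖moebius u z‖ = pseudoDist z u := by
  rw [moebius, pseudoDist, norm_div, norm_div, norm_sub_rev]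

lemma moebius_zero (u : ℂ) : moebius u 0 = u := by simp [moebius]

lemma moebius_self (u : ℂ) : moebius u u = 0 := by simp [moebius]

lemma mapsTo_moebius {u : ℂ} (hu : u ∈ unitDisc) : MapsTo (moebius u) unitDisc unitDisc :=
  fun z hz => show ‖moebius u z‖ < 1 by rw [norm_moebius]; exact pseudoDist_lt_one hz hu

lemma differentiableOn_moebius {u : ℂ} (hu : u ∈ unitDisc) :
    DifferentiableOn ℂ (moebius u) unitDisc :=
  ((differentiableOn_const u).sub differentiableOn_id).div
    ((differentiableOn_const 1).sub ((differentiableOn_const _).mul differentiableOn_id))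
    fun _ hz => one_sub_conj_mul_ne_zero hz hu

lemma moebius_moebius {u z : ℂ} (hu : u ∈ unitDisc) (hz : z ∈ unitDisc) :
    moebius u (moebius u z) = z := by
  have hzu := one_sub_conj_mul_ne_zero hz hu
  have hnum : u - moebius u z = z * (1 - conj u * u) / (1 - conj u * z) := by
    rw [moebius, eq_div_iff hzu, sub_mul, div_mul_cancel₀ _ hzu]
    ring
  have hden : 1 - conj u * moebius u z = (1 - conj u * u) / (1 - conj u * z) := by
    rw [moebius, eq_div_iff hzu, sub_mul, mul_assoc, div_mul_cancel₀ _ hzu]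
    ring
  rw [moebius, hnum, hden, div_div_div_cancel_right₀ hzu,
    mul_div_cancel_right₀ _ (one_sub_conj_mul_ne_zero hu hu)]

lemma pseudoDist_moebius {u z w : ℂ} (hu : u ∈ unitDisc) (hz : z ∈ unitDisc)
    (hw : w ∈ unitDisc) : pseudoDist (moebius u z) (moebius u w) = pseudoDist z w := by
  have hzu := one_sub_conj_mul_ne_zero hz hu
  have hwu := one_sub_conj_mul_ne_zero hw hu
  have hzw := one_sub_conj_mul_ne_zero hz hw
  have huw := one_sub_conj_mul_ne_zero hu hw
  have huu := one_sub_conj_mul_ne_zero hu hu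
  have hnum : moebius u z - moebius u w
      = (z - w) * (conj u * u - 1) / ((1 - conj u * z) * (1 - conj u * w)) := by
    rw [moebius, moebius, div_sub_div _ _ hzu hwu]
    ring
  have hden : 1 - conj (moebius u w) * moebius u z
      = (1 - conj u * u) * (1 - conj w * z) / ((1 - conj w * u) * (1 - conj u * z)) := by
    rw [moebius, moebius, map_div₀, div_mul_div_comm, one_sub_div (mul_ne_zero _ hzu)]
    · simp only [map_sub, map_mul, map_one, conj_conj]
      ring
    · simpa only [map_sub, map_mul, map_one, conj_conj, mul_comm] using huw
  -- `(z - w) / (1 - w̄ z)` gets multiplied by `-(1 - w̄ u) / (1 - ū w)`, which has modulus one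
  have key : (moebius u z - moebius u w) / (1 - conj (moebius u w) * moebius u z)
      = -((z - w) / (1 - conj w * z) * ((1 - conj w * u) / (1 - conj u * w))) := by
    rw [hnum, hden, div_div_div_eq, div_mul_div_comm, ← neg_div,
      div_eq_div_iff (by positivity) (mul_ne_zero hzw hwu)]
    ring
  have hconj : 1 - conj w * u = conj (1 - conj u * w) := by
    simp only [map_sub, map_one, map_mul, conj_conj]
    ring
  rw [pseudoDist, key, norm_neg, norm_mul, norm_div (1 - _), hconj, Complex.norm_conj,
    div_self (norm_ne_zero_iff.mpr hwu), mul_one, pseudoDist]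

lemma pseudoDist_le_of_mapsTo {f : ℂ → ℂ} (hf : DifferentiableOn ℂ f unitDisc)
    (hmaps : MapsTo f unitDisc unitDisc) {z w : ℂ} (hz : z ∈ unitDisc) (hw : w ∈ unitDisc) :
    pseudoDist (f z) (f w) ≤ pseudoDist z w := by
  set g : ℂ → ℂ := moebius (f w) ∘ f ∘ moebius w
  have hgmaps : MapsTo g unitDisc unitDisc :=
    (mapsTo_moebius (hmaps hw)).comp (hmaps.comp (mapsTo_moebius hw))
  have hgd : DifferentiableOn ℂ g unitDisc :=
    (differentiableOn_moebius (hmaps hw)).comp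
      (hf.comp (differentiableOn_moebius hw) (mapsTo_moebius hw)) (hmaps.comp (mapsTo_moebius hw))
  have hg0 : g 0 = 0 := by simp only [g, Function.comp, moebius_zero, moebius_self]
  rw [unitDisc_eq_ball] at hgd hgmaps
  have hschwarz := Complex.norm_le_norm_of_mapsTo_ball hgd
    (hgmaps.mono_right ball_subset_closedBall) hg0
    (show ‖moebius w z‖ < 1 from mapsTo_moebius hw hz)
  simpa only [g, Function.comp, moebius_moebius hw hz, norm_moebius] using hschwarz

lemma pseudoDist_le_norm_add_norm_div {a b : ℂ} (ha : a ∈ unitDisc) (hb : b ∈ unitDisc) :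
    pseudoDist a b ≤ (‖a‖ + ‖b‖) / (1 + ‖a‖ * ‖b‖) := by
  have hden : 0 < ‖1 - conj b * a‖ := norm_pos_iff.mpr (one_sub_conj_mul_ne_zero ha hb)
  have hp : ‖a‖ < 1 := ha
  have hq : ‖b‖ < 1 := hb
  have hp0 := norm_nonneg a
  have hq0 := norm_nonneg b
  rw [pseudoDist, norm_div, div_le_div_iff₀ hden (by positivity)]
  set t := (conj b * a).re
  have ht : -(‖a‖ * ‖b‖) ≤ t := by
    have h := Complex.abs_re_le_norm (conj b * a)
    rw [norm_mul, Complex.norm_conj] at h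
    linarith [neg_abs_le t]
  have hA : ‖a - b‖ ^ 2 = ‖a‖ ^ 2 + ‖b‖ ^ 2 - 2 * t := by
    simp only [t, Complex.sq_norm, Complex.normSq_apply, Complex.sub_re, Complex.sub_im,
      Complex.mul_re, Complex.conj_re, Complex.conj_im]
    ring
  have hB : ‖1 - conj b * a‖ ^ 2 = 1 - 2 * t + ‖a‖ ^ 2 * ‖b‖ ^ 2 := by
    simp only [t, Complex.sq_norm, Complex.normSq_apply, Complex.sub_re, Complex.sub_im,
      Complex.mul_re, Complex.mul_im, Complex.conj_re, Complex.conj_im, Complex.one_re,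
      Complex.one_im]
    ring
  -- the difference of the squares of the two sides is `2 (1 - |a|²)(1 - |b|²)(t + |a||b|)`
  have hprod : 0 ≤ (1 - ‖a‖ ^ 2) * (1 - ‖b‖ ^ 2) * (t + ‖a‖ * ‖b‖) :=
    mul_nonneg (mul_nonneg (by nlinarith) (by nlinarith)) (by linarith)
  refine le_of_pow_le_pow_left₀ two_ne_zero (by positivity) ?_
  nlinarith [hA, hB]

lemma pseudoDist_triangle {z u w : ℂ} (hz : z ∈ unitDisc) (hu : u ∈ unitDisc)
    (hw : w ∈ unitDisc) :
    pseudoDist z w ≤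
      (pseudoDist z u + pseudoDist u w) / (1 + pseudoDist z u * pseudoDist u w) := by
  have h := pseudoDist_le_norm_add_norm_div (mapsTo_moebius hu hz) (mapsTo_moebius hu hw)
  rwa [pseudoDist_moebius hu hz hw, norm_moebius, norm_moebius, pseudoDist_comm w u] at h

lemma artanh_eq_real_artanh {x : ℝ} (hx : x ∈ Icc (-1) 1) : artanh x = Real.artanh x :=
  (Real.artanh_eq_half_log hx).symm

lemma artanh_nonneg {x : ℝ} (hx : 0 ≤ x) (hx1 : x ≤ 1) : 0 ≤ artanh x := by
  rw [artanh_eq_real_artanh ⟨by linarith, hx1⟩]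
  exact Real.artanh_nonneg hx

lemma artanh_le_artanh {x y : ℝ} (hx : -1 < x) (hy : y < 1) (hxy : x ≤ y) :
    artanh x ≤ artanh y := by
  rw [artanh_eq_real_artanh ⟨hx.le, by linarith⟩, artanh_eq_real_artanh ⟨by linarith, hy.le⟩]
  exact Real.artanh_le_artanh hx hy hxy

lemma artanh_add_div {x y : ℝ} (hx : 0 ≤ x) (hx1 : x < 1) (hy : 0 ≤ y) (hy1 : y < 1) :
    artanh ((x + y) / (1 + x * y)) = artanh x + artanh y := by
  have hxy : 0 < 1 + x * y := by positivity
  have key : (1 + (x + y) / (1 + x * y)) / (1 - (x + y) / (1 + x * y))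
      = (1 + x) / (1 - x) * ((1 + y) / (1 - y)) := by
    rw [one_add_div hxy.ne', one_sub_div hxy.ne', div_div_div_cancel_right₀ hxy.ne',
      div_mul_div_comm]
    congr 1 <;> ring
  rw [artanh, key, Real.log_mul (div_pos (by linarith) (by linarith)).ne'
    (div_pos (by linarith) (by linarith)).ne', artanh, artanh]
  ring

lemma hdist_eq_two_mul_artanh (z w : ℂ) : hdist z w = 2 * artanh (pseudoDist z w) := rfl

lemma hdist_self (z : ℂ) : hdist z z = 0 := by simp [hdist, artanh]

lemma hdist_nonneg {z w : ℂ} (hz : z ∈ unitDisc) (hw : w ∈ unitDisc) : 0 ≤ hdist z w :=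
  mul_nonneg zero_le_two (artanh_nonneg (pseudoDist_nonneg z w) (pseudoDist_lt_one hz hw).le)

lemma hdist_le_of_mapsTo {f : ℂ → ℂ} (hf : DifferentiableOn ℂ f unitDisc)
    (hmaps : MapsTo f unitDisc unitDisc) {z w : ℂ} (hz : z ∈ unitDisc) (hw : w ∈ unitDisc) :
    hdist (f z) (f w) ≤ hdist z w := by
  rw [hdist_eq_two_mul_artanh, hdist_eq_two_mul_artanh]
  gcongr
  exact artanh_le_artanh (by linarith [pseudoDist_nonneg (f z) (f w)])
    (pseudoDist_lt_one hz hw) (pseudoDist_le_of_mapsTo hf hmaps hz hw)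

lemma hdist_triangle {z u w : ℂ} (hz : z ∈ unitDisc) (hu : u ∈ unitDisc) (hw : w ∈ unitDisc) :
    hdist z w ≤ hdist z u + hdist u w := by
  have hp0 := pseudoDist_nonneg z u
  have hq0 := pseudoDist_nonneg u w
  have hp1 := pseudoDist_lt_one hz hu
  have hq1 := pseudoDist_lt_one hu hw
  have hsum :
      (pseudoDist z u + pseudoDist u w) / (1 + pseudoDist z u * pseudoDist u w) < 1 := by
    rw [div_lt_one (by positivity)]
    nlinarith
  have h := artanh_le_artanh (by linarith [pseudoDist_nonneg z w]) hsum
    (pseudoDist_triangle hz hu hw)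
  rw [artanh_add_div hp0 hp1 hq0 hq1] at h
  simp only [hdist_eq_two_mul_artanh]
  linarith

lemma mapsTo_leftComp {s : Set ℂ} {g : ℕ → ℂ → ℂ} (hg : ∀ n, MapsTo (g n) s s) (n : ℕ) :
    MapsTo (leftComp g n) s s := by
  induction n with
  | zero => exact mapsTo_id s
  | succ n ih => exact (hg n).comp ih

theorem boundary_DW_induction_estimate_general
    (f : ℂ → ℂ) (fseq : ℕ → ℂ → ℂ)
    (hf : DifferentiableOn ℂ f unitDisc) (hfmap : MapsTo f unitDisc unitDisc)
    (hself : ∀ n, MapsTo (fseq n) unitDisc unitDisc)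
    (hclose : ∀ n : ℕ, ∀ z ∈ unitDisc,
      hdist z 0 < 1 + hdist (f^[n] 0) 0 → hdist (fseq n z) (f z) < 1 / 2 ^ (n + 1)) :
    ∀ n : ℕ, hdist (leftComp fseq (n + 1) 0) (f^[n + 1] 0) < 1 - 1 / 2 ^ (n + 1) := by
  intro n
  induction n with
  | zero =>
    have h := hclose 0 0 zero_mem_unitDisc (by simp [hdist_self])
    norm_num [leftComp] at h ⊢
    linarith
  | succ n ih =>
    set w := leftComp fseq (n + 1) 0
    set p := f^[n + 1] 0
    have hw : w ∈ unitDisc := mapsTo_leftComp hself (n + 1) zero_mem_unitDisc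
    have hp : p ∈ unitDisc := hfmap.iterate (n + 1) zero_mem_unitDisc
    have hwp : hdist w 0 < 1 + hdist p 0 := by
      have := hdist_triangle hw hp zero_mem_unitDisc
      have : (0 : ℝ) < 1 / 2 ^ (n + 1) := by positivity
      linarith
    rw [Function.iterate_succ_apply']
    calc hdist (fseq (n + 1) w) (f p)
        ≤ hdist (fseq (n + 1) w) (f w) + hdist (f w) (f p) :=
          hdist_triangle (hself (n + 1) hw) (hfmap hw) (hfmap hp)
      _ < 1 / 2 ^ (n + 2) + (1 - 1 / 2 ^ (n + 1)) :=
          add_lt_add_of_lt_of_le (hclose (n + 1) w hw hwp)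
            ((hdist_le_of_mapsTo hf hfmap hw hp).trans ih.le)
      _ = 1 - 1 / 2 ^ (n + 2) := by ring

/-- **The inductive estimate in the proof of Theorem 5.** Indices are shifted:
`fseq n` is the map `f_{n+1}`, so the hypothesis for index n states that f_{n+1} is
within 1/2^(n+1) of f on the hyperbolic disc of radius 1 + ρ(f^[n] 0, 0) about 0, and
the conclusion for index n is ρ(F_{n+1}(0), f^[n+1](0)) < 1 - 1/2^(n+1), i.e. the claim
for the positive integer m = n+1. -/
theorem boundary_DW_induction_estimate
    (f : ℂ → ℂ) (fseq : ℕ → ℂ → ℂ)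
    (hf : DifferentiableOn ℂ f unitDisc) (hfmap : MapsTo f unitDisc unitDisc)
    (hholo : ∀ n, DifferentiableOn ℂ (fseq n) unitDisc)
    (hself : ∀ n, MapsTo (fseq n) unitDisc unitDisc)
    (hclose : ∀ n : ℕ, ∀ z ∈ unitDisc,
      hdist z 0 < 1 + hdist (f^[n] 0) 0 → hdist (fseq n z) (f z) < 1 / 2 ^ (n + 1)) :
    ∀ n : ℕ, hdist (leftComp fseq (n + 1) 0) (f^[n + 1] 0) < 1 - 1 / 2 ^ (n + 1) :=
  boundary_DW_induction_estimate_general f fseq hf hfmap hself hclose
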